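/- arXiv:1210.8393 — 2 statements merged into one kernel-verified Lean document; each statement's English description precedes it below -/
import Mathlib

section
/- The map sending (α, β, γ) to z = e^{iα} sin γ / sin β is a bijection from the open simplex {(α, β, γ) ∈ (0,π)^3 : α + β + γ = π} onto the open upper half-plane {z ∈ ℂ : Im z > 0}. The inverse sends z to α = arg z, β = arg(1 − 1/z) = π − arg z − arg(1/(1−z)), γ = arg(1/(1−z)), where arg takes values in (0, π) for points in the upper half-plane. -/
open Real Complex

noncomputable def shapeMap (p : ℝ × ℝ × ℝ) : ℂ :=
  Complex.exp (p.1 * Complex.I) * ((Real.sin p.2.2 / Real.sin p.2.1 : ℝ) : ℂ)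

def shapeSimplex : Set (ℝ × ℝ × ℝ) :=
  {p | p.1 ∈ Set.Ioo 0 π ∧ p.2.1 ∈ Set.Ioo 0 π ∧ p.2.2 ∈ Set.Ioo 0 π ∧ p.1 + p.2.1 + p.2.2 = π}

/-!
Read `z = shapeMap (α, β, γ)` as the triangle with vertices `0, 1, z` and angles `α, β, γ` at
them: `arg z = α`, and by the law of sines `‖z‖ = sin γ / sin β`. The identity
`sin β - sin γ e^{iα} = sin α e^{-iγ}` (for `α + β + γ = π`) shows that `1 / (1 - z)` is the
parameter of the rotated triple `(γ, α, β)`, and rotating once more gives `1 - 1 / z`; so the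
three arguments recover the three angles. Conversely, for `Im z > 0` the arguments of
`z, 1 - 1/z, 1/(1 - z)` lie in `(0, π)` and sum to `π`, since the product of these numbers
is `-1`; the law of sines then shows that they are mapped back to `z`.
-/

open Set

lemma Complex.arg_mem_Ioo_of_im_pos {z : ℂ} (hz : 0 < z.im) : arg z ∈ Ioo 0 π :=
  ⟨(arg_nonneg_iff.2 hz.le).lt_of_ne fun h => hz.ne' (arg_eq_zero_iff.1 h.symm).2,
    arg_lt_pi_iff.2 (Or.inr hz.ne')⟩

lemma Complex.arg_exp_mul_I_mul_ofReal {θ r : ℝ} (hθ : θ ∈ Ioc (-π) π) (hr : 0 < r) :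
    arg (exp (θ * I) * r) = θ := by
  rw [arg_mul_real hr, arg_exp_mul_I, toIocMod_eq_self]
  simpa [two_mul, ← add_assoc] using hθ

lemma Complex.im_one_sub_one_div (z : ℂ) : (1 - 1 / z).im = z.im / normSq z := by
  simp [neg_div]

lemma Complex.im_one_div_one_sub (z : ℂ) : (1 / (1 - z)).im = z.im / normSq (1 - z) := by
  simp

lemma Complex.sin_arg_one_sub_one_div {z : ℂ} (hz : z ≠ 0) :
    Real.sin (arg (1 - 1 / z)) = z.im / (‖z‖ * ‖1 - z‖) := by
  rw [sin_arg, im_one_sub_one_div, normSq_eq_norm_sq,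
    show 1 - 1 / z = -(1 - z) / z by field_simp; ring, norm_div, norm_neg]
  field_simp

lemma Complex.sin_arg_one_div_one_sub (z : ℂ) :
    Real.sin (arg (1 / (1 - z))) = z.im / ‖1 - z‖ := by
  rw [sin_arg, im_one_div_one_sub, normSq_eq_norm_sq, norm_div, norm_one]
  field_simp

lemma eq_pi_of_coe_angle_eq_pi {x : ℝ} (h0 : 0 < x) (h3 : x < 3 * π)
    (h : (x : Real.Angle) = π) : x = π := by
  obtain ⟨k, hk⟩ := Real.Angle.angle_eq_iff_two_pi_dvd_sub.1 h
  have hk_lt : k < 1 := by exact_mod_cast (show (k : ℝ) < 1 by nlinarith [pi_pos])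
  have hk_gt : -1 < k := by exact_mod_cast (show (-1 : ℝ) < k by nlinarith [pi_pos])
  have hk0 : k = 0 := by omega
  simpa [hk0, sub_eq_zero] using hk

lemma Complex.arg_add_arg_add_arg_eq_pi {a b c : ℂ} (ha : 0 < a.im) (hb : 0 < b.im)
    (hc : 0 < c.im) (habc : a * b * c = -1) : arg a + arg b + arg c = π := by
  have ne_zero {w : ℂ} (hw : 0 < w.im) : w ≠ 0 := fun h => by simp [h] at hw
  obtain ⟨ha0, haπ⟩ := arg_mem_Ioo_of_im_pos ha
  obtain ⟨hb0, hbπ⟩ := arg_mem_Ioo_of_im_pos hb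
  obtain ⟨hc0, hcπ⟩ := arg_mem_Ioo_of_im_pos hc
  refine eq_pi_of_coe_angle_eq_pi (by positivity) (by linarith) ?_
  have := arg_mul_coe_angle (mul_ne_zero (ne_zero ha) (ne_zero hb)) (ne_zero hc)
  rw [arg_mul_coe_angle (ne_zero ha) (ne_zero hb), habc, arg_neg_one] at this
  exact_mod_cast this.symm

lemma sin_sub_sin_mul_exp_mul_exp {α β γ : ℝ} (h : α + β + γ = π) :
    (Real.sin β - Real.sin γ * exp (α * I)) * exp (γ * I) = Real.sin α := by
  obtain rfl : α = π - (β + γ) := by linarith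
  apply Complex.ext <;>
  simp only [mul_re, mul_im, sub_re, sub_im, ofReal_re, ofReal_im, exp_ofReal_mul_I_re,
    exp_ofReal_mul_I_im, Real.sin_pi_sub, Real.cos_pi_sub, Real.sin_add, Real.cos_add]
  · linear_combination Real.sin γ * Real.cos β * Real.sin_sq_add_cos_sq γ
  · linear_combination -Real.sin β * Real.sin γ * Real.sin_sq_add_cos_sq γ

section

variable {α β γ : ℝ}

lemma rotate_mem_shapeSimplex (h : (α, β, γ) ∈ shapeSimplex) : (γ, α, β) ∈ shapeSimplex := by
  obtain ⟨hα, hβ, hγ, hs⟩ := h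
  exact ⟨hγ, hα, hβ, by linarith⟩

lemma sin_pos_of_mem_shapeSimplex (h : (α, β, γ) ∈ shapeSimplex) :
    0 < Real.sin α ∧ 0 < Real.sin β ∧ 0 < Real.sin γ := by
  obtain ⟨hα, hβ, hγ, -⟩ := h
  exact ⟨sin_pos_of_pos_of_lt_pi hα.1 hα.2, sin_pos_of_pos_of_lt_pi hβ.1 hβ.2,
    sin_pos_of_pos_of_lt_pi hγ.1 hγ.2⟩

lemma arg_shapeMap (h : (α, β, γ) ∈ shapeSimplex) : arg (shapeMap (α, β, γ)) = α := by
  obtain ⟨-, hβ, hγ⟩ := sin_pos_of_mem_shapeSimplex h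
  exact arg_exp_mul_I_mul_ofReal ⟨by linarith [h.1.1, pi_pos], h.1.2.le⟩ (div_pos hγ hβ)

lemma im_shapeMap_pos (h : (α, β, γ) ∈ shapeSimplex) : 0 < (shapeMap (α, β, γ)).im := by
  obtain ⟨hα, hβ, hγ⟩ := sin_pos_of_mem_shapeSimplex h
  rw [shapeMap, mul_im, ofReal_im, ofReal_re, exp_ofReal_mul_I_im, mul_zero, zero_add]
  exact mul_pos hα (div_pos hγ hβ)

lemma one_div_one_sub_shapeMap (h : (α, β, γ) ∈ shapeSimplex) :
    1 / (1 - shapeMap (α, β, γ)) = shapeMap (γ, α, β) := by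
  obtain ⟨hα, hβ, -⟩ := sin_pos_of_mem_shapeSimplex h
  have hα' : (Real.sin α : ℂ) ≠ 0 := ofReal_ne_zero.2 hα.ne'
  have hβ' : (Real.sin β : ℂ) ≠ 0 := ofReal_ne_zero.2 hβ.ne'
  refine (eq_one_div_of_mul_eq_one_left ?_).symm
  have key := sin_sub_sin_mul_exp_mul_exp h.2.2.2
  simp only [shapeMap, ofReal_div]
  generalize exp (α * I) = a, exp (γ * I) = c at key ⊢
  field_simp
  linear_combination key

lemma one_sub_one_div_shapeMap (h : (α, β, γ) ∈ shapeSimplex) :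
    1 - 1 / shapeMap (α, β, γ) = shapeMap (β, γ, α) := by
  have hz := (im_shapeMap_pos h).ne'
  have hz0 : shapeMap (α, β, γ) ≠ 0 := fun h0 => by simp [h0] at hz
  have hz1 : 1 - shapeMap (α, β, γ) ≠ 0 := fun h1 => by simp [← sub_eq_zero.1 h1] at hz
  rw [← one_div_one_sub_shapeMap (rotate_mem_shapeSimplex h), ← one_div_one_sub_shapeMap h,
    show 1 - 1 / (1 - shapeMap (α, β, γ)) = -shapeMap (α, β, γ) / (1 - shapeMap (α, β, γ)) by
      field_simp; ring, one_div_div]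
  field_simp
  ring

end

noncomputable def shapeAngles (z : ℂ) : ℝ × ℝ × ℝ :=
  (arg z, arg (1 - 1 / z), arg (1 / (1 - z)))

lemma shapeAngles_shapeMap {p : ℝ × ℝ × ℝ} (hp : p ∈ shapeSimplex) :
    shapeAngles (shapeMap p) = p := by
  obtain ⟨α, β, γ⟩ := p
  rw [shapeAngles, one_sub_one_div_shapeMap hp, one_div_one_sub_shapeMap hp, arg_shapeMap hp,
    arg_shapeMap (rotate_mem_shapeSimplex (rotate_mem_shapeSimplex hp)),
    arg_shapeMap (rotate_mem_shapeSimplex hp)]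

lemma shapeAngles_mem_shapeSimplex {z : ℂ} (hz : 0 < z.im) : shapeAngles z ∈ shapeSimplex := by
  have hz0 : z ≠ 0 := fun h => by simp [h] at hz
  have hz1 : 1 - z ≠ 0 := fun h => by simp [← sub_eq_zero.1 h] at hz
  have hβ : 0 < (1 - 1 / z).im := by
    rw [im_one_sub_one_div]; exact div_pos hz (normSq_pos.2 hz0)
  have hγ : 0 < (1 / (1 - z)).im := by
    rw [im_one_div_one_sub]; exact div_pos hz (normSq_pos.2 hz1)
  refine ⟨arg_mem_Ioo_of_im_pos hz, arg_mem_Ioo_of_im_pos hβ, arg_mem_Ioo_of_im_pos hγ,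
    arg_add_arg_add_arg_eq_pi hz hβ hγ ?_⟩
  field_simp
  ring

/-- Law of sines in the triangle `0, 1, z`. -/
lemma shapeMap_shapeAngles {z : ℂ} (hz : 0 < z.im) : shapeMap (shapeAngles z) = z := by
  have hz0 : z ≠ 0 := fun h => by simp [h] at hz
  have hz1 : 1 - z ≠ 0 := fun h => by simp [← sub_eq_zero.1 h] at hz
  have hsines : Real.sin (arg (1 / (1 - z))) / Real.sin (arg (1 - 1 / z)) = ‖z‖ := by
    rw [sin_arg_one_div_one_sub, sin_arg_one_sub_one_div hz0]
    field_simp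
  rw [shapeMap, shapeAngles, hsines, mul_comm, norm_mul_exp_arg_mul_I]

theorem stmt_7 :
    Set.BijOn shapeMap shapeSimplex {z : ℂ | 0 < z.im} ∧
    ∀ p ∈ shapeSimplex,
      p.1 = Complex.arg (shapeMap p) ∧
      p.2.1 = Complex.arg (1 - 1 / shapeMap p) ∧
      p.2.2 = Complex.arg (1 / (1 - shapeMap p)) := by
  have hinv : InvOn shapeAngles shapeMap shapeSimplex {z | 0 < z.im} :=
    ⟨fun p hp => shapeAngles_shapeMap hp, fun z hz => shapeMap_shapeAngles hz⟩
  refine ⟨hinv.bijOn (fun ⟨α, β, γ⟩ hp => im_shapeMap_pos hp)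
    (fun z hz => shapeAngles_mem_shapeSimplex hz), fun p hp => ?_⟩
  have h := (shapeAngles_shapeMap hp).symm
  exact ⟨congrArg Prod.fst h, congrArg (·.2.1) h, congrArg (·.2.2) h⟩
end

section
/- Define the Lobachevsky function Λ(θ) = −∫_0^θ ln|2 sin t| dt for θ ∈ ℝ, and let V(α, β) = Λ(α) + Λ(β) + Λ(π − α − β) on the open triangle D = {(α, β) : α > 0, β > 0, α + β < π}. Then V is strictly concave on D. -/
open Real

noncomputable def lobachevsky (θ : ℝ) : ℝ := -∫ t in (0 : ℝ)..θ, Real.log |2 * Real.sin t|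

noncomputable def idealVol (p : ℝ × ℝ) : ℝ :=
  lobachevsky p.1 + lobachevsky p.2 + lobachevsky (π - p.1 - p.2)

def angleTriangle : Set (ℝ × ℝ) := {p | 0 < p.1 ∧ 0 < p.2 ∧ p.1 + p.2 < π}

/-!
Strict concavity is tested on lines. Along a line through `D` the three angles move
affinely, and `α + β + γ = π` forces their speeds `u, v, w` to satisfy `u + v + w = 0`.
Since `Λ' = -log |2 sin|` and `Λ'' = -cot`, the second derivative of `V` along the line
is `-(cot α u² + cot β v² + cot γ w²)`. This quadratic form is positive definite on
`u + v + w = 0`, because `cot α + cot γ = sin β / (sin α sin γ) > 0` and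
`cot α cot β + cot β cot γ + cot γ cot α = 1`.
-/

open MeasureTheory Filter Topology

lemma intervalIntegrable_log_abs_two_mul_sin (a b : ℝ) :
    IntervalIntegrable (fun t => log |2 * sin t|) volume a b :=
  (analyticOnNhd_const.mul analyticOnNhd_sin).meromorphicOn.intervalIntegrable_log_norm

lemma hasDerivAt_lobachevsky {θ : ℝ} (hθ : sin θ ≠ 0) :
    HasDerivAt lobachevsky (-log |2 * sin θ|) θ := by
  have hcont : ContinuousAt (fun t => log |2 * sin t|) θ :=
    ContinuousAt.log (by fun_prop) (by simpa using hθ)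
  have hmeas : Measurable fun t => log |2 * sin t| := by fun_prop
  exact (intervalIntegral.integral_hasDerivAt_right (intervalIntegrable_log_abs_two_mul_sin 0 θ)
    hmeas.aestronglyMeasurable.stronglyMeasurableAtFilter hcont).neg

lemma hasDerivAt_log_abs_two_mul_sin {θ : ℝ} (hθ : sin θ ≠ 0) :
    HasDerivAt (fun t => log |2 * sin t|) (cot θ) θ := by
  simp only [log_abs]
  convert ((hasDerivAt_sin θ).const_mul 2).log (by simpa using hθ) using 1
  rw [cot_eq_cos_div_sin]
  field_simp

lemma cot_add_cot_pos {α β : ℝ} (hα : 0 < α) (hβ : 0 < β) (hαβ : α + β < π) :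
    0 < cot α + cot β := by
  have hsα := sin_pos_of_pos_of_lt_pi hα (by linarith)
  have hsβ := sin_pos_of_pos_of_lt_pi hβ (by linarith)
  have hsαβ := sin_pos_of_pos_of_lt_pi (add_pos hα hβ) hαβ
  rw [cot_eq_cos_div_sin, cot_eq_cos_div_sin, div_add_div _ _ hsα.ne' hsβ.ne']
  rw [sin_add] at hsαβ
  exact div_pos (by linarith) (mul_pos hsα hsβ)

lemma cot_mul_cot_add_cot_mul_cot_add_cot_mul_cot {α β γ : ℝ} (h : α + β + γ = π)
    (hα : sin α ≠ 0) (hβ : sin β ≠ 0) (hγ : sin γ ≠ 0) :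
    cot α * cot β + cot β * cot γ + cot γ * cot α = 1 := by
  obtain rfl : γ = π - (α + β) := by linarith
  rw [sin_pi_sub] at hγ
  simp only [cot_eq_cos_div_sin, cos_pi_sub, sin_pi_sub]
  rw [sin_add] at hγ ⊢
  rw [cos_add]
  field_simp
  ring

lemma quadratic_pos_of_mul_add_mul_add_mul_eq_one {a b c u v w : ℝ} (hac : 0 < a + c)
    (habc : a * b + b * c + c * a = 1) (huvw : u + v + w = 0) (huv : u ≠ 0 ∨ v ≠ 0) :
    0 < a * u ^ 2 + b * v ^ 2 + c * w ^ 2 := by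
  obtain rfl : w = -(u + v) := by linarith
  -- completing the square: `(a + c)` times the form is `((a + c) u + c v)² + v²`
  have hsq : 0 < ((a + c) * u + c * v) ^ 2 + v ^ 2 := by
    rcases eq_or_ne v 0 with rfl | hv
    · have hu : u ≠ 0 := huv.resolve_right (not_not.2 rfl)
      nlinarith [sq_pos_of_ne_zero (mul_ne_zero hac.ne' hu)]
    · positivity
  refine pos_of_mul_pos_right (a := a + c) ?_ hac.le
  linear_combination hsq - v ^ 2 * habc

lemma strictConcaveOn_of_hasDerivAt2_neg {D : Set ℝ} (hD : Convex ℝ D) {f f' f'' : ℝ → ℝ}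
    (hf : ∀ x ∈ D, HasDerivAt f (f' x) x) (hf' : ∀ x ∈ interior D, HasDerivAt f' (f'' x) x)
    (hf'' : ∀ x ∈ interior D, f'' x < 0) : StrictConcaveOn ℝ D f := by
  refine strictConcaveOn_of_deriv2_neg hD (fun x hx => (hf x hx).continuousAt.continuousWithinAt)
    fun x hx => ?_
  have hderiv : deriv f =ᶠ[𝓝 x] f' := by
    filter_upwards [isOpen_interior.mem_nhds hx] with y hy using (hf y (interior_subset hy)).deriv
  rw [Function.iterate_succ_apply', Function.iterate_one, hderiv.deriv_eq, (hf' x hx).deriv]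
  exact hf'' x hx

theorem StrictConcaveOn.of_forall_lineMap {𝕜 E β : Type*} [Field 𝕜] [LinearOrder 𝕜]
    [IsStrictOrderedRing 𝕜] [AddCommGroup E] [Module 𝕜 E] [AddCommGroup β] [PartialOrder β]
    [Module 𝕜 β] {s : Set E} {f : E → β} (hs : Convex 𝕜 s)
    (h : ∀ x ∈ s, ∀ y ∈ s, x ≠ y →
      StrictConcaveOn 𝕜 (AffineMap.lineMap (k := 𝕜) x y ⁻¹' s) (f ∘ AffineMap.lineMap x y)) :
    StrictConcaveOn 𝕜 s f := by
  refine ⟨hs, fun x hx y hy hxy a b ha hb hab => ?_⟩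
  have hline := (h x hx y hy hxy).2 (x := 0) (y := 1) (by simpa using hx) (by simpa using hy)
    zero_ne_one ha hb hab
  obtain rfl : a = 1 - b := by linear_combination hab
  simpa [AffineMap.lineMap_apply_module] using hline

lemma convex_angleTriangle : Convex ℝ angleTriangle :=
  (convex_halfSpace_gt (LinearMap.fst ℝ ℝ ℝ).isLinear 0).inter
    ((convex_halfSpace_gt (LinearMap.snd ℝ ℝ ℝ).isLinear 0).inter
      (convex_halfSpace_lt (LinearMap.fst ℝ ℝ ℝ + LinearMap.snd ℝ ℝ ℝ).isLinear π))

lemma strictConcaveOn_lobachevsky_add_lobachevsky_add_lobachevsky {T : Set ℝ} (hT : Convex ℝ T)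
    {a b c u v w : ℝ} (habc : a + b + c = π) (huvw : u + v + w = 0) (huv : u ≠ 0 ∨ v ≠ 0)
    (hT_pos : ∀ t ∈ T, 0 < t * u + a ∧ 0 < t * v + b ∧ 0 < t * w + c) :
    StrictConcaveOn ℝ T
      (fun t => lobachevsky (t * u + a) + lobachevsky (t * v + b) + lobachevsky (t * w + c)) := by
  have hΛ' (t d e : ℝ) (h : sin (t * d + e) ≠ 0) :
      HasDerivAt (fun s => lobachevsky (s * d + e)) (-log |2 * sin (t * d + e)| * d) t :=
    (hasDerivAt_lobachevsky h).comp (h := fun s => s * d + e) t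
      ((hasDerivAt_mul_const d).add_const e)
  have hΛ'' (t d e : ℝ) (h : sin (t * d + e) ≠ 0) :
      HasDerivAt (fun s => -log |2 * sin (s * d + e)| * d) (-(cot (t * d + e) * d ^ 2)) t := by
    refine (((hasDerivAt_log_abs_two_mul_sin h).comp t
      ((hasDerivAt_mul_const d).add_const e)).neg.mul_const d).congr_deriv ?_
    ring
  have hsum (t : ℝ) : (t * u + a) + (t * v + b) + (t * w + c) = π := by
    linear_combination habc + t * huvw
  have hsin (t : ℝ) (ht : t ∈ T) :
      0 < sin (t * u + a) ∧ 0 < sin (t * v + b) ∧ 0 < sin (t * w + c) := by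
    obtain ⟨hα, hβ, hγ⟩ := hT_pos t ht
    exact ⟨sin_pos_of_pos_of_lt_pi hα (by linarith [hsum t]),
      sin_pos_of_pos_of_lt_pi hβ (by linarith [hsum t]),
      sin_pos_of_pos_of_lt_pi hγ (by linarith [hsum t])⟩
  refine strictConcaveOn_of_hasDerivAt2_neg hT
    (f' := fun t => -log |2 * sin (t * u + a)| * u + -log |2 * sin (t * v + b)| * v
      + -log |2 * sin (t * w + c)| * w)
    (f'' := fun t => -(cot (t * u + a) * u ^ 2) + -(cot (t * v + b) * v ^ 2)
      + -(cot (t * w + c) * w ^ 2))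
    (fun t ht => ?_) (fun t ht => ?_) fun t ht => ?_
  · obtain ⟨hα, hβ, hγ⟩ := hsin t ht
    exact ((hΛ' t u a hα.ne').add (hΛ' t v b hβ.ne')).add (hΛ' t w c hγ.ne')
  · obtain ⟨hα, hβ, hγ⟩ := hsin t (interior_subset ht)
    exact ((hΛ'' t u a hα.ne').add (hΛ'' t v b hβ.ne')).add (hΛ'' t w c hγ.ne')
  · obtain ⟨hα, hβ, hγ⟩ := hsin t (interior_subset ht)
    obtain ⟨hα', hβ', hγ'⟩ := hT_pos t (interior_subset ht)
    have hQ := quadratic_pos_of_mul_add_mul_add_mul_eq_one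
      (cot_add_cot_pos hα' hγ' (by linarith [hsum t]))
      (cot_mul_cot_add_cot_mul_cot_add_cot_mul_cot (hsum t) hα.ne' hβ.ne' hγ.ne') huvw huv
    linarith

theorem stmt_18 : StrictConcaveOn ℝ angleTriangle idealVol := by
  refine .of_forall_lineMap convex_angleTriangle fun x _ y _ hxy => ?_
  have hcoords (t : ℝ) :
      AffineMap.lineMap x y t = (t * (y.1 - x.1) + x.1, t * (y.2 - x.2) + x.2) := by
    ext <;> simp [AffineMap.lineMap_apply_module']
  have hline : idealVol ∘ AffineMap.lineMap x y = fun t => lobachevsky (t * (y.1 - x.1) + x.1)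
      + lobachevsky (t * (y.2 - x.2) + x.2)
      + lobachevsky (t * (x.1 + x.2 - y.1 - y.2) + (π - x.1 - x.2)) := by
    funext t
    simp only [Function.comp_apply, hcoords, idealVol]
    ring_nf
  rw [hline]
  refine strictConcaveOn_lobachevsky_add_lobachevsky_add_lobachevsky
    (convex_angleTriangle.affine_preimage _) (by ring) (by ring) ?_ fun t ht => ?_
  · by_contra! h
    exact hxy (Prod.ext (by linarith [h.1]) (by linarith [h.2]))
  · obtain ⟨h1, h2, h3⟩ : AffineMap.lineMap x y t ∈ angleTriangle := ht
    rw [hcoords] at h1 h2 h3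
    exact ⟨h1, h2, by linarith⟩
end
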